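/- The Magnus representation r : Aut Fₙ → M(n, ℤ[Fₙ]), sending φ to the matrix whose (i,j)-entry is the image under the bar-involution of ∂(φ(γⱼ))/∂γᵢ, satisfies the crossed homomorphism identity r(φψ) = r(φ) · ᶠr(ψ), where ᶠr(ψ) is the matrix obtained by applying φ entrywise. In particular r(φ) ∈ GL(n, ℤ[Fₙ]) for every automorphism φ. -/

import Mathlib

noncomputable def barInv (n : ℕ) (x : MonoidAlgebra ℤ (FreeGroup (Fin n))) :
    MonoidAlgebra ℤ (FreeGroup (Fin n)) :=
  MonoidAlgebra.mapDomain (fun g => g⁻¹) x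

/-!
Fox derivatives are crossed homomorphisms `Fₙ → ℤ[Fₙ]`, and a crossed homomorphism on a free
group is determined by its values on the basis. For `φ : Fₙ →* G` both `w ↦ D (φ w)` and
`w ↦ ∑ₖ φ(∂w/∂γₖ) · D (φ γₖ)` are crossed homomorphisms agreeing on the basis, which is the
chain rule. Since the bar involution reverses products, the chain rule for `∂/∂γᵢ` and `φ` at
`ψ γⱼ` is the `(i, j)` entry of `r(φψ) = r(φ) · ᵠr(ψ)`. As `r(id) = 1`, this identity for
`φ φ⁻¹` and `φ⁻¹ φ` shows that `ᵠr(φ⁻¹)` is a two-sided inverse of `r(φ)`.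
-/

open MonoidAlgebra

def IsCrossedHom {G A : Type*} [Monoid G] [Ring A] (ρ : G →* A) (D : G → A) : Prop :=
  ∀ x y, D (x * y) = D x + ρ x * D y

namespace IsCrossedHom

variable {G H A B : Type*} [Ring A] [Ring B]

section Monoid

variable [Monoid G] {ρ : G →* A} {D : G → A}

theorem map_one (hD : IsCrossedHom ρ D) : D 1 = 0 := by
  simpa using hD 1 1

theorem comp [Monoid H] (hD : IsCrossedHom ρ D) (φ : H →* G) :
    IsCrossedHom (ρ.comp φ) (D ∘ φ) := fun x y => by
  simp only [Function.comp_apply, map_mul, hD (φ x) (φ y), MonoidHom.comp_apply]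

theorem map_ringHom (hD : IsCrossedHom ρ D) (f : A →+* B) :
    IsCrossedHom ((f : A →* B).comp ρ) (f ∘ D) := fun x y => by
  simp [hD x y]

theorem mul_const (hD : IsCrossedHom ρ D) (c : A) : IsCrossedHom ρ (D · * c) := fun x y => by
  simp only [hD x y, add_mul, mul_assoc]

theorem sum {ι : Type*} (s : Finset ι) {D : ι → G → A} (hD : ∀ i, IsCrossedHom ρ (D i)) :
    IsCrossedHom ρ (fun x => ∑ i ∈ s, D i x) := fun x y => by
  simp only [hD _ x y, Finset.sum_add_distrib, Finset.mul_sum]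

end Monoid

theorem map_inv [Group G] {ρ : G →* A} {D : G → A} (hD : IsCrossedHom ρ D) (x : G) :
    D x⁻¹ = -(ρ x⁻¹ * D x) := by
  have h := hD x⁻¹ x
  rw [inv_mul_cancel, hD.map_one] at h
  exact eq_neg_of_add_eq_zero_left h.symm

theorem freeGroup_ext {α : Type*} {ρ : FreeGroup α →* A} {D E : FreeGroup α → A}
    (hD : IsCrossedHom ρ D) (hE : IsCrossedHom ρ E) (h : ∀ a, D (.of a) = E (.of a)) :
    D = E := by
  funext w
  induction w using FreeGroup.induction_on with
  | C1 => rw [hD.map_one, hE.map_one]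
  | of a => exact h a
  | inv_of a ih => rw [hD.map_inv, hE.map_inv, ih]
  | mul x y hx hy => rw [hD, hE, hx, hy]

end IsCrossedHom

theorem MonoidAlgebra.mapDomainRingHom_comp_of {R M N : Type*} [Semiring R] [Monoid M]
    [Monoid N] (f : M →* N) :
    (mapDomainRingHom R f : R[M] →* R[N]).comp (of R M) = (of R N).comp f :=
  MonoidHom.ext fun _ => by simp

theorem IsCrossedHom.fox_chain_rule {R G α : Type*} [Ring R] [Monoid G] [Fintype α]
    [DecidableEq α] {d : α → FreeGroup α → R[FreeGroup α]}
    (hd : ∀ k, IsCrossedHom (of R _) (d k))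
    (hbasis : ∀ k a, d k (.of a) = if a = k then 1 else 0)
    {D : G → R[G]} (hD : IsCrossedHom (of R G) D) (φ : FreeGroup α →* G) (w : FreeGroup α) :
    D (φ w) = ∑ k, mapDomainRingHom R φ (d k w) * D (φ (.of k)) := by
  have hchain : IsCrossedHom ((of R G).comp φ)
      (fun w => ∑ k, mapDomainRingHom R φ (d k w) * D (φ (.of k))) := by
    refine IsCrossedHom.sum _ fun k => ?_
    have := ((hd k).map_ringHom (mapDomainRingHom R φ)).mul_const (D (φ (.of k)))
    rwa [mapDomainRingHom_comp_of] at this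
  refine congrFun (IsCrossedHom.freeGroup_ext (hD.comp φ) hchain fun a => ?_) w
  simp [hbasis]

namespace MonoidAlgebra

variable {R M : Type*} [Semiring R] [Monoid M]

variable (R M) in
@[simps]
noncomputable def mapDomainMulAut : MulAut M →* (R[M] →+* R[M]) where
  toFun φ := mapDomainRingHom R φ.toMonoidHom
  map_one' := mapDomainRingHom_id
  map_mul' φ ψ := mapDomainRingHom_comp (M := M) φ.toMonoidHom ψ.toMonoidHom

end MonoidAlgebra

theorem Matrix.isUnit_of_crossedHom {G A m : Type*} [Group G] [Ring A] [Fintype m]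
    [DecidableEq m]
    (σ : G →* (A →+* A)) {r : G → Matrix m m A} (hone : r 1 = 1)
    (hmul : ∀ g h, r (g * h) = r g * (r h).map (σ g)) (g : G) : IsUnit (r g) := by
  have hright : r g * (r g⁻¹).map (σ g) = 1 := by rw [← hmul, mul_inv_cancel, hone]
  have hleft : (r g⁻¹).map (σ g) * r g = 1 := by
    have h := congrArg (·.map (σ g)) (hmul g⁻¹ g)
    rwa [inv_mul_cancel, hone, Matrix.map_mul, Matrix.map_map, ← RingHom.coe_comp,
      ← RingHom.mul_def, ← map_mul, mul_inv_cancel, map_one, RingHom.coe_one, Matrix.map_id,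
      Matrix.map_one _ (map_zero _) (map_one _), eq_comm] at h
  exact ⟨⟨r g, _, hright, hleft⟩, rfl⟩

namespace barInv

variable {n : ℕ}

theorem add (x y : MonoidAlgebra ℤ (FreeGroup (Fin n))) :
    barInv n (x + y) = barInv n x + barInv n y :=
  mapDomain_add _ x y

theorem one : barInv n 1 = 1 := by
  simp [barInv, one_def]

theorem sum {ι : Type*} (s : Finset ι) (f : ι → MonoidAlgebra ℤ (FreeGroup (Fin n))) :
    barInv n (∑ k ∈ s, f k) = ∑ k ∈ s, barInv n (f k) :=
  map_sum (mapDomainAddEquiv ℤ (Equiv.inv _)) f s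

theorem mul (x y : MonoidAlgebra ℤ (FreeGroup (Fin n))) :
    barInv n (x * y) = barInv n y * barInv n x := by
  induction x using MonoidAlgebra.induction_linear with
  | zero => simp [barInv]
  | add x x' hx hx' => rw [add_mul, add, add, mul_add, hx, hx']
  | single g a =>
    induction y using MonoidAlgebra.induction_linear with
    | zero => simp [barInv]
    | add y y' hy hy' => rw [mul_add, add, add, add_mul, hy, hy']
    | single h b => simp [barInv, mul_comm a b]

theorem mapDomainRingHom_apply (φ : FreeGroup (Fin n) →* FreeGroup (Fin n))
    (x : MonoidAlgebra ℤ (FreeGroup (Fin n))) :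
    barInv n (mapDomainRingHom ℤ φ x) = mapDomainRingHom ℤ φ (barInv n x) := by
  induction x using MonoidAlgebra.induction_linear with
  | zero => simp [barInv]
  | add x y hx hy => rw [map_add, add, add, map_add, hx, hy]
  | single g a => simp [barInv]

end barInv

/-- The Magnus representation `r : Aut Fₙ → M(n, ℤ[Fₙ])`,
`r(φ)ᵢⱼ = bar(∂(φ(γⱼ))/∂γᵢ)`, satisfies the crossed homomorphism identity
`r(φψ) = r(φ)·ᵠr(ψ)`; in particular `r(φ)` is invertible for every automorphism. -/
theorem magnus_aut_crossed_hom (n : ℕ)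
    (d : Fin n → FreeGroup (Fin n) → MonoidAlgebra ℤ (FreeGroup (Fin n)))
    (hcross : ∀ (j : Fin n) (x y : FreeGroup (Fin n)),
      d j (x * y) = d j x + MonoidAlgebra.of ℤ (FreeGroup (Fin n)) x * d j y)
    (hbasis : ∀ j i : Fin n, d j (FreeGroup.of i) = if i = j then 1 else 0)
    (r : MulAut (FreeGroup (Fin n)) →
      Matrix (Fin n) (Fin n) (MonoidAlgebra ℤ (FreeGroup (Fin n))))
    (hr : ∀ (φ : MulAut (FreeGroup (Fin n))) (i j : Fin n),
      r φ i j = barInv n (d i (φ (FreeGroup.of j)))) :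
    (∀ φ ψ : MulAut (FreeGroup (Fin n)),
      r (φ * ψ) = r φ * (r ψ).map (MonoidAlgebra.mapDomainRingHom ℤ φ.toMonoidHom)) ∧
    (∀ φ : MulAut (FreeGroup (Fin n)), IsUnit (r φ)) := by
  have hmul : ∀ φ ψ : MulAut (FreeGroup (Fin n)),
      r (φ * ψ) = r φ * (r ψ).map (MonoidAlgebra.mapDomainRingHom ℤ φ.toMonoidHom) :=
    fun φ ψ => Matrix.ext fun i j => by
      have chain := IsCrossedHom.fox_chain_rule hcross hbasis (hcross i) φ.toMonoidHom
      simp only [MulEquiv.coe_toMonoidHom] at chain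
      rw [hr, Matrix.mul_apply, MulAut.mul_apply, chain, barInv.sum]
      refine Finset.sum_congr rfl fun k _ => ?_
      rw [barInv.mul, barInv.mapDomainRingHom_apply, Matrix.map_apply, hr, hr]
  have hone : r 1 = 1 := Matrix.ext fun i j => by
    rw [hr, MulAut.one_apply, hbasis, Matrix.one_apply]
    obtain rfl | hij := eq_or_ne i j
    · rw [if_pos rfl, barInv.one]
    · rw [if_neg hij.symm, if_neg hij]
      exact mapDomain_zero _
  refine ⟨hmul, Matrix.isUnit_of_crossedHom (mapDomainMulAut ℤ _) hone fun φ ψ => ?_⟩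
  rw [mapDomainMulAut_apply]
  exact hmul φ ψ
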